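/- arXiv:1005.1744 — 7 statements merged into one kernel-verified Lean document; each statement's English description precedes it below -/
import Mathlib

section
/- Let P be an n×l binary matrix and Q an n×l' binary matrix (with the same number n of rows). Then C(P) = C(Q) as subsets of F₂ⁿ if and only if P and Q determine the same binary matroid on the row set, i.e. for every subset X ⊆ {1,…,n}, the F₂-rank of the submatrix of P consisting of the rows indexed by X equals the F₂-rank of the submatrix of Q consisting of the rows indexed by X. -/
/-!
Restricting the code `C(P)` to the coordinates in `X` gives the code of the row submatrix `P_X`,
which has `2 ^ ρ(X)` words; hence equal codes have equal rank functions. Conversely, the codewords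
vanishing on `X` form the kernel of this restriction, so there are `2 ^ (ρ(E) - ρ(X))` of them.
Thus `ρ` fixes, for every `X`, the number of codewords whose zero set contains `X`; by Möbius
inversion on the subset lattice it fixes the number of codewords whose zero set is exactly `Z`,
and a binary word is determined by its zero set.
-/

open Matrix BigOperators Finset

noncomputable section

/-- The binary code generated by the columns of `P`: all vectors `P·s`. -/
def code {m : Type*} [Fintype m] {l : ℕ} (P : Matrix m (Fin l) (ZMod 2)) :
    Finset (m → ZMod 2) :=
  Finset.image P.mulVec Finset.univ

/-- Rank function of the binary matroid of `P`: the F₂-rank of the submatrix of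
rows indexed by `X`. -/
def rho {m : Type*} [Fintype m] {l : ℕ} (P : Matrix m (Fin l) (ZMod 2)) (X : Finset m) : ℕ :=
  (P.submatrix (fun i : {i // i ∈ X} => (i : m)) id).rank

/-- Tutte polynomial of the binary matroid of `P`. -/
def tutte {m : Type*} [Fintype m] {l : ℕ} (P : Matrix m (Fin l) (ZMod 2)) (x y : ℂ) : ℂ :=
  ∑ X ∈ (Finset.univ : Finset m).powerset,
    (x - 1) ^ (rho P Finset.univ - rho P X) * (y - 1) ^ (X.card - rho P X)

/-- Normalised weight enumerator. -/
def alpha {m : Type*} [Fintype m] {l : ℕ} (P : Matrix m (Fin l) (ZMod 2)) (θ : ℝ) : ℂ :=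
  (2 : ℂ) ^ (-(P.rank : ℤ)) *
    ∑ c ∈ code P, Complex.exp (Complex.I * θ * ((Fintype.card m : ℂ) - 2 * (hammingNorm c : ℂ)))

/-- The IQP probability distribution of an X-program `(P, θ)`. -/
def iqpProb {n l : ℕ} (P : Matrix (Fin n) (Fin l) (ZMod 2)) (θ : ℝ) (x : Fin l → ZMod 2) : ℝ :=
  ‖(2 : ℂ) ^ (-(l : ℤ)) *
    ∑ a : Fin l → ZMod 2, (-1 : ℂ) ^ (x ⬝ᵥ a).val *
      Complex.exp (Complex.I * θ * ∑ j, (-1 : ℂ) ^ ((P j) ⬝ᵥ a).val)‖ ^ 2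

/-- Affinification: the submatrix of rows `P_j` with `P_j ⬝ s = 1`. -/
def affin {n l : ℕ} (P : Matrix (Fin n) (Fin l) (ZMod 2)) (s : Fin l → ZMod 2) :
    Matrix {j : Fin n // (P j) ⬝ᵥ s = 1} (Fin l) (ZMod 2) :=
  Matrix.of fun j k => P j.1 k

theorem AddSubgroup.card_ker_inf_mul_card_map {G H : Type*} [AddGroup G] [AddGroup H]
    (f : G →+ H) (S : AddSubgroup G) :
    Nat.card ↥(f.ker ⊓ S) * Nat.card ↥(S.map f) = Nat.card S := by
  rw [← relIndex_ker, ← inf_relIndex_right, ← relIndex_bot_left (H := f.ker ⊓ S),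
    relIndex_mul_relIndex _ _ _ bot_le inf_le_right, relIndex_bot_left]

theorem eq_of_forall_sum_Ici_eq {α R : Type*} [Ring R] [PartialOrder α] [OrderTop α]
    [LocallyFiniteOrder α] [DecidableEq α] {f g : α → R}
    (h : ∀ a, ∑ b ∈ Ici a, f b = ∑ b ∈ Ici a, g b) : f = g := by
  funext a
  rw [IncidenceAlgebra.moebius_inversion_top f _ (fun _ => rfl),
    IncidenceAlgebra.moebius_inversion_top g _ (fun _ => rfl)]
  simp only [h]

theorem Finset.card_eq_nat_card_of_coe_eq {α A : Type*} [SetLike A α] {s : Finset α} {S : A}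
    (h : (s : Set α) = S) : #s = Nat.card S := by
  rw [← Set.ncard_coe_finset, h, ← Nat.card_coe_set_eq]
  rfl

section

variable {m : Type*} [Fintype m] {l : ℕ}

theorem coe_code (P : Matrix m (Fin l) (ZMod 2)) :
    (code P : Set (m → ZMod 2)) = LinearMap.range P.mulVecLin := by
  ext c
  simp [code]

theorem card_code_eq_two_pow_rank (P : Matrix m (Fin l) (ZMod 2)) : #(code P) = 2 ^ P.rank := by
  rw [card_eq_nat_card_of_coe_eq (coe_code P), Nat.card_eq_fintype_card,
    Module.card_eq_pow_finrank (K := ZMod 2), ZMod.card, Matrix.rank]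

theorem code_submatrix {m' : Type*} [Fintype m'] (P : Matrix m (Fin l) (ZMod 2)) (e : m' → m) :
    code (P.submatrix e id) = (code P).image fun c => c ∘ e := by
  simp only [code, image_image]
  rfl

theorem two_pow_rho_eq_card_image (P : Matrix m (Fin l) (ZMod 2)) (X : Finset m) :
    2 ^ rho P X = #((code P).image fun c => c ∘ ((↑) : X → m)) := by
  rw [← code_submatrix, card_code_eq_two_pow_rank, rho]

theorem two_pow_rho_univ_eq_card_code (P : Matrix m (Fin l) (ZMod 2)) :
    2 ^ rho P univ = #(code P) := by
  rw [two_pow_rho_eq_card_image, card_image_of_injective]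
  intro c d h
  funext i
  exact congrFun h ⟨i, mem_univ i⟩

def zeroSet (c : m → ZMod 2) : Finset m := {i | c i = 0}

theorem zeroSet_injective : Function.Injective (zeroSet (m := m)) := by
  intro c d h
  have binary : ∀ a b : ZMod 2, (a = 0 ↔ b = 0) → a = b := by decide
  funext i
  exact binary _ _ (by simpa [zeroSet] using congrArg (i ∈ ·) h)

variable [DecidableEq m]

theorem card_filter_zeroSet_pos_iff (s : Finset (m → ZMod 2)) (c : m → ZMod 2) :
    0 < #{d ∈ s | zeroSet d = zeroSet c} ↔ c ∈ s := by
  rw [card_pos, filter_congr fun d _ => zeroSet_injective.eq_iff, filter_eq']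
  split_ifs with hc <;> simp [hc]

theorem card_vanishing_mul_two_pow_rho (P : Matrix m (Fin l) (ZMod 2)) (X : Finset m) :
    #{c ∈ code P | X ⊆ zeroSet c} * 2 ^ rho P X = #(code P) := by
  let f := (LinearMap.funLeft (ZMod 2) (ZMod 2) ((↑) : X → m)).toAddMonoidHom
  let S := (LinearMap.range P.mulVecLin).toAddSubgroup
  have hcode := coe_code P
  rw [two_pow_rho_eq_card_image, card_eq_nat_card_of_coe_eq (S := f.ker ⊓ S),
    card_eq_nat_card_of_coe_eq (S := S.map f), card_eq_nat_card_of_coe_eq (S := S) hcode,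
    AddSubgroup.card_ker_inf_mul_card_map]
  · rw [coe_image, hcode]
    rfl
  · ext c
    rw [coe_filter, Set.mem_ofPred_eq, ← mem_coe, hcode]
    simp [zeroSet, f, S, funext_iff, subset_iff, and_comm]

theorem sum_Ici_card_zeroSet_eq (s : Finset (m → ZMod 2)) (T : Finset m) :
    ∑ S ∈ Ici T, #{c ∈ s | zeroSet c = S} = #{c ∈ s | T ⊆ zeroSet c} := by
  rw [card_eq_sum_card_fiberwise (f := zeroSet) (t := Ici T)
    (fun c hc => by simpa using (mem_filter.mp hc).2)]
  refine sum_congr rfl fun S hS => ?_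
  rw [filter_filter]
  refine congrArg card (filter_congr fun c _ => ?_)
  rw [mem_Ici] at hS
  exact ⟨fun hc => ⟨hc ▸ hS, hc⟩, And.right⟩

theorem eq_of_card_vanishing_eq {s t : Finset (m → ZMod 2)}
    (h : ∀ T : Finset m, #{c ∈ s | T ⊆ zeroSet c} = #{c ∈ t | T ⊆ zeroSet c}) : s = t := by
  have hfibre : (fun S => (#{c ∈ s | zeroSet c = S} : ℤ)) =
      fun S => (#{c ∈ t | zeroSet c = S} : ℤ) :=
    eq_of_forall_sum_Ici_eq fun T => by
      simp only [← Nat.cast_sum, sum_Ici_card_zeroSet_eq, h]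
  ext c
  rw [← card_filter_zeroSet_pos_iff, ← card_filter_zeroSet_pos_iff,
    Nat.cast_injective (congrFun hfibre (zeroSet c))]

end

/-- `C(P) = C(Q)` iff `P` and `Q` determine the same binary matroid on the
row set, i.e. every subset of rows has the same F₂-rank in `P` as in `Q`. -/
theorem code_eq_iff_same_matroid {n l l' : ℕ}
    (P : Matrix (Fin n) (Fin l) (ZMod 2)) (Q : Matrix (Fin n) (Fin l') (ZMod 2)) :
    code P = code Q ↔ ∀ X : Finset (Fin n), rho P X = rho Q X := by
  constructor
  · intro h X
    exact Nat.pow_right_injective le_rfl (by simp only [two_pow_rho_eq_card_image (X := X), h])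
  · intro h
    refine eq_of_card_vanishing_eq fun T =>
      Nat.eq_of_mul_eq_mul_right (pow_pos two_pos (rho P T)) ?_
    rw [card_vanishing_mul_two_pow_rho, h T, card_vanishing_mul_two_pow_rho,
      ← two_pow_rho_univ_eq_card_code, ← two_pow_rho_univ_eq_card_code, h]

end
end

section
/- (Greene's theorem.) Let P be an n×l binary matrix, let C = C(P) with rank r, and let M(P) be the associated binary matroid. Then for every complex number ζ with ζ ≠ 0 and ζ ≠ 1: W_C(ζ) = ζ^{n−r} · (1−ζ)^r · T_{M(P)}( (1+ζ)/(1−ζ), 1/ζ ). -/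
open Matrix BigOperators Finset

noncomputable section

/-!
Expanding `ζ ^ |c| = ζ ^ |c| * ((1 - ζ) + ζ) ^ #Z(c)` by the binomial theorem over the subsets `X`
of the zero set `Z(c)` of `c` gives `ζ ^ |c| = ∑_{X ⊆ Z(c)} ζ ^ (n - #X) * (1 - ζ) ^ #X`.
Summing over the code and exchanging the sums, `X` is weighted by the number of codewords vanishing
on `X`: the kernel of the restriction `C → F₂^X`, whose image has dimension `ρ(X)`, so there are
`2 ^ (r - ρ(X))` of them. Term by term this is the subset expansion of the Tutte polynomial, since
`(1 + ζ)/(1 - ζ) - 1 = 2ζ/(1 - ζ)` and `1/ζ - 1 = (1 - ζ)/ζ`.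
-/

open Module

theorem Submodule.finrank_inf_ker_add_finrank_map {K V W : Type*} [Field K] [AddCommGroup V]
    [Module K V] [FiniteDimensional K V] [AddCommGroup W] [Module K W]
    (p : Submodule K V) (f : V →ₗ[K] W) :
    finrank K ↥(p ⊓ LinearMap.ker f) + finrank K ↥(p.map f) = finrank K p := by
  have hker : LinearMap.ker (f.domRestrict p) = (p ⊓ LinearMap.ker f).comap p.subtype := by
    ext x
    simp
  rw [← (Submodule.comapSubtypeEquivOfLe inf_le_left).finrank_eq, ← hker,
    ← LinearMap.range_domRestrict, add_comm]
  exact LinearMap.finrank_range_add_finrank_ker _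

theorem pow_hammingNorm_eq_sum_powerset {ι β R : Type*} [Fintype ι] [Zero β]
    [DecidableEq β] [CommRing R] (c : ι → β) (ζ : R) :
    ζ ^ hammingNorm c = ∑ X ∈ univ.powerset with ∀ i ∈ X, c i = 0,
      ζ ^ (Fintype.card ι - #X) * (1 - ζ) ^ #X := by
  set Z := univ.filter fun i => c i = 0
  have hfilter : (univ.powerset.filter fun X : Finset ι => ∀ i ∈ X, c i = 0) = Z.powerset := by
    ext X
    simp [Z, subset_iff]
  have hcard : #Z + hammingNorm c = Fintype.card ι := by
    rw [hammingNorm, ← card_univ, card_filter_add_card_filter_not]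
  calc ζ ^ hammingNorm c = ζ ^ hammingNorm c * ((1 - ζ) + ζ) ^ #Z := by simp
    _ = ∑ X ∈ Z.powerset, ζ ^ (Fintype.card ι - #X) * (1 - ζ) ^ #X := by
      rw [← sum_pow_mul_eq_add_pow, mul_sum]
      refine sum_congr rfl fun X hX => ?_
      have hXZ : #X ≤ #Z := card_le_card (mem_powerset.mp hX)
      rw [show Fintype.card ι - #X = hammingNorm c + (#Z - #X) by omega, pow_add]
      ring
    _ = _ := by rw [hfilter]

theorem sum_pow_hammingNorm_eq_sum_card_vanishing {ι β R : Type*} [Fintype ι]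
    [Zero β] [DecidableEq β] [CommRing R] (C : Finset (ι → β)) (ζ : R) :
    ∑ c ∈ C, ζ ^ hammingNorm c = ∑ X ∈ univ.powerset,
      (#{c ∈ C | ∀ i ∈ X, c i = 0} : R) * (ζ ^ (Fintype.card ι - #X) * (1 - ζ) ^ #X) := by
  simp only [pow_hammingNorm_eq_sum_powerset, sum_filter]
  rw [sum_comm]
  refine sum_congr rfl fun X _ => ?_
  rw [← sum_filter, sum_const, nsmul_eq_mul]

theorem mul_tutte_summand_eq {K : Type*} [Field K] {ζ : K} (hζ0 : ζ ≠ 0) (hζ1 : ζ ≠ 1)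
    {n r k ρ : ℕ} (hρr : ρ ≤ r) (hρk : ρ ≤ k) (hr : r ≤ n) (hk : k ≤ n) :
    ζ ^ (n - r) * (1 - ζ) ^ r * (((1 + ζ) / (1 - ζ) - 1) ^ (r - ρ) * (1 / ζ - 1) ^ (k - ρ)) =
      2 ^ (r - ρ) * (ζ ^ (n - k) * (1 - ζ) ^ k) := by
  have h1ζ : 1 - ζ ≠ 0 := sub_ne_zero.mpr hζ1.symm
  have hx : (1 + ζ) / (1 - ζ) - 1 = 2 * ζ / (1 - ζ) := by field_simp; ring
  have hy : 1 / ζ - 1 = (1 - ζ) / ζ := by field_simp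
  rw [hx, hy, div_pow, div_pow, mul_pow]
  field_simp
  have hζpow : ζ ^ (n - r) * ζ ^ (r - ρ) = ζ ^ (n - k) * ζ ^ (k - ρ) := by
    rw [← pow_add, ← pow_add, show n - r + (r - ρ) = n - k + (k - ρ) by omega]
  have h1ζpow : (1 - ζ) ^ r * (1 - ζ) ^ (k - ρ) = (1 - ζ) ^ k * (1 - ζ) ^ (r - ρ) := by
    rw [← pow_add, ← pow_add, show r + (k - ρ) = k + (r - ρ) by omega]
  linear_combination (2 ^ (r - ρ) * (1 - ζ) ^ r * (1 - ζ) ^ (k - ρ)) * hζpow +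
    (2 ^ (r - ρ) * ζ ^ (n - k) * ζ ^ (k - ρ)) * h1ζpow

section BinaryMatroid

variable {m : Type*} [Fintype m] {l : ℕ} (P : Matrix m (Fin l) (ZMod 2))

theorem mem_code_iff {c : m → ZMod 2} : c ∈ code P ↔ c ∈ LinearMap.range P.mulVecLin := by
  simp [code]

theorem rho_eq_finrank_map (X : Finset m) :
    rho P X = finrank (ZMod 2)
      ↥((LinearMap.range P.mulVecLin).map (LinearMap.funLeft (ZMod 2) (ZMod 2) Subtype.val :
        (m → ZMod 2) →ₗ[ZMod 2] (X → ZMod 2))) := by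
  rw [← LinearMap.range_comp]
  rfl

theorem rho_le_rank (X : Finset m) : rho P X ≤ P.rank :=
  P.rank_submatrix_le _ _

theorem rho_le_card (X : Finset m) : rho P X ≤ #X := by
  simpa [rho] using (P.submatrix (fun i : X => (i : m)) id).rank_le_card_height

theorem rho_univ : rho P univ = P.rank :=
  P.rank_submatrix (Equiv.subtypeUnivEquiv mem_univ) (Equiv.refl _)

theorem card_code_vanishing_on (X : Finset m)
    [DecidablePred fun c : m → ZMod 2 => ∀ i ∈ X, c i = 0] :
    #{c ∈ code P | ∀ i ∈ X, c i = 0} = 2 ^ (P.rank - rho P X) := by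
  set res : (m → ZMod 2) →ₗ[ZMod 2] (X → ZMod 2) := LinearMap.funLeft _ _ Subtype.val
  set C := LinearMap.range P.mulVecLin
  have hcoe : (({c ∈ code P | ∀ i ∈ X, c i = 0} : Finset _) : Set (m → ZMod 2)) =
      C ⊓ LinearMap.ker res := by
    ext c
    simp [mem_code_iff, funext_iff, res, C]
  have hdim := C.finrank_inf_ker_add_finrank_map res
  rw [← rho_eq_finrank_map] at hdim
  rw [← Set.ncard_coe_finset, hcoe, ← Nat.card_coe_set_eq, SetLike.coe_sort_coe,
    natCard_eq_pow_finrank (K := ZMod 2), Nat.card_zmod, show P.rank = finrank (ZMod 2) C from rfl]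
  congr 1
  omega

end BinaryMatroid

/-- Greene's theorem: for `ζ ≠ 0, 1`,
`W_C(ζ) = ζ^(n−r) · (1−ζ)^r · T_{M(P)}((1+ζ)/(1−ζ), 1/ζ)`. -/
theorem greene {n l : ℕ} (P : Matrix (Fin n) (Fin l) (ZMod 2)) (ζ : ℂ)
    (hζ0 : ζ ≠ 0) (hζ1 : ζ ≠ 1) :
    ∑ c ∈ code P, ζ ^ hammingNorm c =
      ζ ^ (n - P.rank) * (1 - ζ) ^ P.rank *
        tutte P ((1 + ζ) / (1 - ζ)) (1 / ζ) := by
  have hrank : P.rank ≤ n := P.rank_le_card_height.trans_eq (Fintype.card_fin n)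
  rw [sum_pow_hammingNorm_eq_sum_card_vanishing, tutte, mul_sum, rho_univ, Fintype.card_fin]
  refine sum_congr rfl fun X _ => ?_
  have hX : #X ≤ n := (card_le_univ X).trans_eq (Fintype.card_fin n)
  rw [card_code_vanishing_on, Nat.cast_pow, Nat.cast_ofNat,
    mul_tutte_summand_eq hζ0 hζ1 (rho_le_rank P X) (rho_le_card P X) hrank hX]

end
end

section
/- Let P be an n×l binary matrix and s ∈ F₂ˡ, and let P_s be the affinification of P by s. Then every codeword of C(P_s) has even Hamming weight if and only if Pᵀ·P·s = 0 (equivalently, if and only if the column vector P·s is orthogonal to every codeword of C(P)). -/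
open Matrix BigOperators Finset

noncomputable section

/-! Over `F₂` a word has even weight iff its coordinates sum to `0`. For the codeword
`P_s t` this sum is `∑_{(P s)_j = 1} (P t)_j = (P s) ⬝ (P t) = (Pᵀ P s) ⬝ t`, and it vanishes
for every `t` iff `Pᵀ P s = 0`. -/

lemma ZMod.sum_eq_hammingNorm {m : Type*} [Fintype m] (c : m → ZMod 2) :
    ∑ j, c j = (hammingNorm c : ZMod 2) := by
  have hone : ∀ j ∈ univ.filter (fun j => c j ≠ 0), c j = 1 := fun j hj =>
    Fin.eq_one_of_ne_zero (c j) (mem_filter.mp hj).2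
  rw [hammingNorm, ← sum_filter_ne_zero, sum_congr rfl hone, sum_const, nsmul_one]

lemma even_hammingNorm_iff_sum_eq_zero {m : Type*} [Fintype m] (c : m → ZMod 2) :
    Even (hammingNorm c) ↔ ∑ j, c j = 0 := by
  rw [ZMod.sum_eq_hammingNorm, ZMod.natCast_eq_zero_iff, even_iff_two_dvd]

lemma sum_subtype_eq_one_eq_dotProduct {m : Type*} [Fintype m] (u v : m → ZMod 2) :
    ∑ j : {j // u j = 1}, v j = u ⬝ᵥ v := by
  rw [← sum_subtype (univ.filter (u · = 1)) (by simp) v, sum_filter, dotProduct]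
  refine sum_congr rfl fun j _ => ?_
  by_cases h : u j = 0
  · simp [h]
  · have h1 : u j = 1 := Fin.eq_one_of_ne_zero (u j) h
    simp [h1]

lemma forall_mem_code_iff {m : Type*} [Fintype m] {l : ℕ} (P : Matrix m (Fin l) (ZMod 2))
    (p : (m → ZMod 2) → Prop) : (∀ c ∈ code P, p c) ↔ ∀ t, p (P *ᵥ t) := by
  simp [code]

lemma affin_mulVec_apply {n l : ℕ} (P : Matrix (Fin n) (Fin l) (ZMod 2)) (s t : Fin l → ZMod 2)
    (j : {j : Fin n // P j ⬝ᵥ s = 1}) : (affin P s *ᵥ t) j = (P *ᵥ t) j :=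
  rfl

lemma even_of_mem_code_affin_iff {n l : ℕ} (P : Matrix (Fin n) (Fin l) (ZMod 2))
    (s : Fin l → ZMod 2) :
    (∀ c ∈ code (affin P s), Even (hammingNorm c)) ↔ ∀ t, (P *ᵥ s) ⬝ᵥ (P *ᵥ t) = 0 := by
  simp only [forall_mem_code_iff, even_hammingNorm_iff_sum_eq_zero, affin_mulVec_apply]
  exact forall_congr' fun t => by
    -- the rows of `affin P s` are those `j` with `(P *ᵥ s) j = 1`, up to unfolding `mulVec`
    rw [← sum_subtype_eq_one_eq_dotProduct (P *ᵥ s) (P *ᵥ t)]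
    rfl

/-- every codeword of `C(P_s)` has even Hamming weight iff `Pᵀ·P·s = 0`
(equivalently, iff `P·s` is orthogonal to every codeword of `C(P)`). -/
theorem affin_even_iff {n l : ℕ} (P : Matrix (Fin n) (Fin l) (ZMod 2))
    (s : Fin l → ZMod 2) :
    ((∀ c ∈ code (affin P s), Even (hammingNorm c)) ↔ (Pᵀ * P).mulVec s = 0) ∧
    ((∀ c ∈ code (affin P s), Even (hammingNorm c)) ↔
      ∀ c ∈ code P, P.mulVec s ⬝ᵥ c = 0) := by
  have hgram : ∀ t, (P *ᵥ s) ⬝ᵥ (P *ᵥ t) = ((Pᵀ * P) *ᵥ s) ⬝ᵥ t := fun t => by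
    rw [dotProduct_mulVec, ← mulVec_transpose, mulVec_mulVec]
  rw [even_of_mem_code_affin_iff, forall_mem_code_iff]
  simp only [hgram, dotProduct_eq_zero_iff, iff_self, and_true]

end
end

section
/- Let P be an n×l binary matrix with rows P₁,…,Pₙ, code C(P) of rank r, and let θ be any real angle. Then 2^{−l} · Σ_{s∈F₂ˡ} exp( iθ · Σ_{j=1}^n (−1)^{P_j·s} ) = α_{(P,θ)} = 2^{−r} · Σ_{c∈C(P)} exp( iθ·(n − 2|c|) ). (This is the transition amplitude ⟨0| exp(iθ H_P) |0⟩ of the X-program (P,θ).) -/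
open Matrix BigOperators Finset

noncomputable section

/-! Since `(-1)^{P_j·s} = 1 - 2 (P s)_j`, the phase depends on `s` only through the codeword
`P s`. The map `s ↦ P s` is a group homomorphism onto `C(P)` whose fibres are cosets of its
kernel, so they all have the same size and averaging over `s ∈ F₂ˡ` is averaging over
`C(P)`, a set of `2^r` elements. -/

theorem AddMonoidHom.card_image_mul_sum_comp {G H R : Type*} [AddGroup G] [Fintype G]
    [AddGroup H] [DecidableEq H] [CommSemiring R] (f : G →+ H) (g : H → R) :
    #(univ.image f) * ∑ x, g (f x) = Fintype.card G * ∑ y ∈ univ.image f, g y := by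
  set k := #{x | f x = 0}
  have hfiber : ∀ y ∈ univ.image f, #{x | f x = y} = k := fun y hy =>
    card_fiber_eq_of_mem_range f (by simpa using hy) ⟨0, map_zero f⟩
  have hcard : Fintype.card G = #(univ.image f) * k := by
    rw [← card_univ, card_eq_sum_card_image f, sum_congr rfl hfiber, sum_const, smul_eq_mul]
  rw [sum_comp, sum_congr rfl fun y hy => by rw [hfiber y hy], ← smul_sum, hcard, nsmul_eq_mul]
  push_cast
  ring

theorem card_code {m : Type*} [Fintype m] {l : ℕ} (P : Matrix m (Fin l) (ZMod 2)) :
    #(code P) = 2 ^ P.rank := by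
  have hrange : Fintype.card (Set.range P.mulVec) =
      Fintype.card (LinearMap.range P.mulVecLin) :=
    Fintype.card_congr' rfl
  rw [code, ← Set.toFinset_range, Set.toFinset_card, hrange,
    Module.card_eq_pow_finrank (K := ZMod 2), ZMod.card]
  rfl

theorem ZMod.neg_one_pow_val_eq_ite {R : Type*} [Monoid R] [HasDistribNeg R] (a : ZMod 2) :
    (-1 : R) ^ a.val = if a = 0 then 1 else -1 := by
  obtain rfl | rfl : a = 0 ∨ a = 1 := by revert a; decide
  · simp
  · rw [ZMod.val_one, if_neg one_ne_zero, pow_one]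

theorem sum_neg_one_pow_val_eq_card_sub_two_mul_hammingNorm {ι R : Type*} [Fintype ι] [Ring R]
    (c : ι → ZMod 2) :
    ∑ j, (-1 : R) ^ (c j).val = Fintype.card ι - 2 * hammingNorm c := by
  have hsplit := card_filter_add_card_filter_not (s := univ) (fun j => c j = 0)
  simp only [ZMod.neg_one_pow_val_eq_ite, sum_ite, sum_const, hammingNorm, card_univ] at hsplit ⊢
  rw [← hsplit]
  push_cast
  simp only [smul_neg, nsmul_eq_mul, mul_one]
  rw [two_mul]
  abel

/-- the transition amplitude `⟨0|exp(iθH_P)|0⟩` equals `α_{(P,θ)}`: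
`2^{−l} · Σ_{s∈F₂ˡ} exp(iθ·Σ_j (−1)^{P_j·s}) = 2^{−r} · Σ_{c∈C(P)} exp(iθ(n−2|c|))`. -/
theorem amplitude_zero_eq_alpha {n l : ℕ} (P : Matrix (Fin n) (Fin l) (ZMod 2)) (θ : ℝ) :
    (2 : ℂ) ^ (-(l : ℤ)) *
        ∑ s : Fin l → ZMod 2,
          Complex.exp (Complex.I * θ * ∑ j, (-1 : ℂ) ^ ((P j) ⬝ᵥ s).val) =
      (2 : ℂ) ^ (-(P.rank : ℤ)) *
        ∑ c ∈ code P, Complex.exp (Complex.I * θ * ((n : ℂ) - 2 * (hammingNorm c : ℂ))) := by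
  set g : (Fin n → ZMod 2) → ℂ := fun c => Complex.exp (Complex.I * θ * (n - 2 * hammingNorm c))
  have hphase : ∀ s : Fin l → ZMod 2,
      Complex.exp (Complex.I * θ * ∑ j, (-1 : ℂ) ^ ((P j) ⬝ᵥ s).val) = g (P *ᵥ s) := fun s => by
    have h := sum_neg_one_pow_val_eq_card_sub_two_mul_hammingNorm (R := ℂ) (P *ᵥ s)
    rw [Fintype.card_fin] at h
    exact congrArg (fun x => Complex.exp (Complex.I * θ * x)) h
  have haverage : (#(code P) : ℂ) * ∑ s, g (P *ᵥ s) =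
      Fintype.card (Fin l → ZMod 2) * ∑ c ∈ code P, g c :=
    P.mulVecLin.toAddMonoidHom.card_image_mul_sum_comp g
  rw [card_code, Fintype.card_fun, ZMod.card, Fintype.card_fin] at haverage
  push_cast at haverage
  simp_rw [hphase, _root_.zpow_neg, zpow_natCast]
  field_simp
  linear_combination haverage

end
end

section
/- Let P be an n×l binary matrix with rows P₁,…,Pₙ, θ a real angle, and s ∈ F₂ˡ. Then the correlation coefficient of the IQP distribution satisfies β_s = 2^{−l} · Σ_{a∈F₂ˡ} exp( 2iθ · Σ_{j : P_j·s = 1} (−1)^{P_j·a} ), where the inner sum ranges over those row indices j for which P_j·s = 1. -/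
open Matrix BigOperators Finset

noncomputable section

/-!
The amplitude of `x` is `2^{-l}` times the Walsh–Hadamard transform at `x` of
`f a = exp (iθ ∑_j (-1)^{P_j·a})`. Expanding `|·|²` and summing the characters over `x`
collapses `β_s` to the autocorrelation `2^{-l} ∑_a f a · conj (f (a + s))`. In its exponent the
rows with `P_j·s = 0` cancel, and the rows with `P_j·s = 1` change sign and so count twice.
-/

lemma ZMod.neg_one_pow_val_add (u v : ZMod 2) :
    (-1 : ℂ) ^ (u + v).val = (-1) ^ u.val * (-1) ^ v.val := by
  rw [ZMod.val_add, ← pow_add, ← neg_one_pow_eq_pow_mod_two]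

lemma ZMod.eq_zero_or_eq_one_two (u : ZMod 2) : u = 0 ∨ u = 1 := by
  revert u; decide

lemma Pi.neg_eq_self_zmod_two {ι : Type*} (x : ι → ZMod 2) : -x = x :=
  funext fun k => ZMod.neg_eq_self_mod_two (x k)

lemma Pi.add_add_cancel_zmod_two {ι : Type*} (x y : ι → ZMod 2) : x + y + y = x := by
  simpa only [Pi.neg_eq_self_zmod_two] using neg_add_cancel_right x y

lemma sum_neg_one_pow_dotProduct {ι : Type*} [Fintype ι] [DecidableEq ι] (v : ι → ZMod 2) :
    ∑ x : ι → ZMod 2, (-1 : ℂ) ^ (x ⬝ᵥ v).val = if v = 0 then 2 ^ Fintype.card ι else 0 := by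
  split_ifs with hv
  · simp [hv]
  · obtain ⟨i, hi⟩ := Function.ne_iff.mp hv
    -- flipping the `i`-th coordinate is a fixed-point-free involution that negates each term
    refine Finset.sum_ninvolution (· + Pi.single i 1) (fun x => ?_) (fun x _ h => ?_)
      (fun _ => Finset.mem_univ _) (fun x => Pi.add_add_cancel_zmod_two _ _)
    · rw [add_dotProduct, single_dotProduct, one_mul,
        (v i).eq_zero_or_eq_one_two.resolve_left hi, ZMod.neg_one_pow_val_add]
      simp [ZMod.val_one]
    · simpa using congrFun h i

lemma conj_neg_one_pow (k : ℕ) : starRingEnd ℂ ((-1 : ℂ) ^ k) = (-1) ^ k := by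
  simp

lemma norm_sq_sum_neg_one_pow_mul {ι : Type*} [Fintype ι] [DecidableEq ι] (f : (ι → ZMod 2) → ℂ)
    (x : ι → ZMod 2) :
    ((‖∑ a, (-1 : ℂ) ^ (x ⬝ᵥ a).val * f a‖ ^ 2 : ℝ) : ℂ) =
      ∑ a, ∑ b, (-1 : ℂ) ^ (x ⬝ᵥ (a + b)).val * (f a * starRingEnd ℂ (f b)) := by
  rw [Complex.sq_norm, ← Complex.mul_conj, map_sum, Finset.sum_mul_sum]
  simp only [map_mul, conj_neg_one_pow, dotProduct_add, ZMod.neg_one_pow_val_add]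
  refine Finset.sum_congr rfl fun a _ => Finset.sum_congr rfl fun b _ => by ring

/-- Autocorrelation form of Parseval's identity for the Walsh–Hadamard transform. -/
lemma sum_neg_one_pow_mul_norm_sq_walsh {ι : Type*} [Fintype ι] [DecidableEq ι]
    (f : (ι → ZMod 2) → ℂ) (s : ι → ZMod 2) :
    ∑ x : ι → ZMod 2, (-1 : ℂ) ^ (x ⬝ᵥ s).val *
        ((‖∑ a, (-1 : ℂ) ^ (x ⬝ᵥ a).val * f a‖ ^ 2 : ℝ) : ℂ) =
      2 ^ Fintype.card ι * ∑ a, f a * starRingEnd ℂ (f (a + s)) := by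
  have hsupp (a b : ι → ZMod 2) : a + b + s = 0 ↔ b = a + s := by
    rw [show a + b + s = b + (a + s) by abel, add_eq_zero_iff_eq_neg,
      Pi.neg_eq_self_zmod_two]
  calc _ = ∑ a, ∑ b, (f a * starRingEnd ℂ (f b)) *
        ∑ x : ι → ZMod 2, (-1 : ℂ) ^ (x ⬝ᵥ (a + b + s)).val := by
        simp only [norm_sq_sum_neg_one_pow_mul, Finset.mul_sum]
        rw [Finset.sum_comm]
        refine Finset.sum_congr rfl fun a _ => ?_
        rw [Finset.sum_comm]
        refine Finset.sum_congr rfl fun b _ => Finset.sum_congr rfl fun x _ => ?_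
        rw [dotProduct_add x (a + b), ZMod.neg_one_pow_val_add]
        ring
    _ = _ := by
        simp only [sum_neg_one_pow_dotProduct, hsupp, mul_ite, mul_zero, Finset.sum_ite_eq',
          Finset.mem_univ, if_true, Finset.mul_sum]
        refine Finset.sum_congr rfl fun a _ => by ring

lemma sum_neg_one_pow_sub_sum_neg_one_pow_add {m : Type*} [Fintype m] (u v : m → ZMod 2) :
    ∑ j, (-1 : ℂ) ^ (u j).val - ∑ j, (-1 : ℂ) ^ (u j + v j).val =
      2 * ∑ j ∈ Finset.univ.filter (fun j => v j = 1), (-1 : ℂ) ^ (u j).val := by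
  rw [← Finset.sum_sub_distrib, Finset.mul_sum, Finset.sum_filter]
  refine Finset.sum_congr rfl fun j _ => ?_
  rw [ZMod.neg_one_pow_val_add]
  rcases (v j).eq_zero_or_eq_one_two with hv | hv
  · simp [hv]
  · simp [hv, ZMod.val_one]
    ring

lemma exp_mul_conj_exp_sum_neg_one_pow {m : Type*} [Fintype m] (θ : ℝ) (u v : m → ZMod 2) :
    Complex.exp (Complex.I * θ * ∑ j, (-1 : ℂ) ^ (u j).val) *
        starRingEnd ℂ (Complex.exp (Complex.I * θ * ∑ j, (-1 : ℂ) ^ (u j + v j).val)) =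
      Complex.exp (2 * Complex.I * θ *
        ∑ j ∈ Finset.univ.filter (fun j => v j = 1), (-1 : ℂ) ^ (u j).val) := by
  rw [← Complex.exp_conj, ← Complex.exp_add]
  congr 1
  simp only [map_mul, map_sum, conj_neg_one_pow, Complex.conj_I, Complex.conj_ofReal]
  linear_combination (Complex.I * θ) * sum_neg_one_pow_sub_sum_neg_one_pow_add u v

def iqpPhase {n l : ℕ} (P : Matrix (Fin n) (Fin l) (ZMod 2)) (θ : ℝ) (a : Fin l → ZMod 2) : ℂ :=
  Complex.exp (Complex.I * θ * ∑ j, (-1 : ℂ) ^ ((P j) ⬝ᵥ a).val)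

lemma iqpProb_eq_norm_sq {n l : ℕ} (P : Matrix (Fin n) (Fin l) (ZMod 2)) (θ : ℝ)
    (x : Fin l → ZMod 2) :
    iqpProb P θ x =
      ‖∑ a, (-1 : ℂ) ^ (x ⬝ᵥ a).val * ((2 : ℂ) ^ (-(l : ℤ)) * iqpPhase P θ a)‖ ^ 2 := by
  rw [iqpProb, Finset.mul_sum]
  exact congrArg (‖·‖ ^ 2) (Finset.sum_congr rfl fun a _ => mul_left_comm _ _ _)

lemma iqpPhase_mul_conj_iqpPhase_add {n l : ℕ} (P : Matrix (Fin n) (Fin l) (ZMod 2)) (θ : ℝ)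
    (a s : Fin l → ZMod 2) :
    iqpPhase P θ a * starRingEnd ℂ (iqpPhase P θ (a + s)) =
      Complex.exp (2 * Complex.I * θ *
        ∑ j ∈ Finset.univ.filter (fun j : Fin n => (P j) ⬝ᵥ s = 1),
          (-1 : ℂ) ^ ((P j) ⬝ᵥ a).val) := by
  simpa only [iqpPhase, ← dotProduct_add] using
    exp_mul_conj_exp_sum_neg_one_pow θ (fun j => P j ⬝ᵥ a) (fun j => P j ⬝ᵥ s)

/-- `β_s = 2^{−l} · Σ_{a∈F₂ˡ} exp(2iθ · Σ_{j : P_j·s = 1} (−1)^{P_j·a})`. -/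
theorem beta_eq_restricted_sum {n l : ℕ} (P : Matrix (Fin n) (Fin l) (ZMod 2)) (θ : ℝ)
    (s : Fin l → ZMod 2) :
    ((∑ x : Fin l → ZMod 2, (-1 : ℝ) ^ (x ⬝ᵥ s).val * iqpProb P θ x : ℝ) : ℂ) =
      (2 : ℂ) ^ (-(l : ℤ)) *
        ∑ a : Fin l → ZMod 2,
          Complex.exp (2 * Complex.I * θ *
            ∑ j ∈ Finset.univ.filter (fun j : Fin n => (P j) ⬝ᵥ s = 1),
              (-1 : ℂ) ^ ((P j) ⬝ᵥ a).val) := by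
  set c : ℂ := 2 ^ (-(l : ℤ))
  have hc : starRingEnd ℂ c = c := by simp [c, map_ofNat]
  have hcc : 2 ^ l * (c * c) = c := by
    simp only [c, ← zpow_natCast, ← zpow_add₀ (two_ne_zero' ℂ)]
    ring_nf
  calc _ = ∑ x : Fin l → ZMod 2, (-1 : ℂ) ^ (x ⬝ᵥ s).val *
        ((‖∑ a, (-1 : ℂ) ^ (x ⬝ᵥ a).val * (c * iqpPhase P θ a)‖ ^ 2 : ℝ) : ℂ) := by
        push_cast [iqpProb_eq_norm_sq]
        rfl
    _ = 2 ^ l * ∑ a, c * iqpPhase P θ a * starRingEnd ℂ (c * iqpPhase P θ (a + s)) := by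
        rw [sum_neg_one_pow_mul_norm_sq_walsh, Fintype.card_fin]
    _ = _ := by
        rw [Finset.mul_sum _ _ (2 ^ l), Finset.mul_sum _ _ c]
        refine Finset.sum_congr rfl fun a _ => ?_
        rw [← iqpPhase_mul_conj_iqpPhase_add, map_mul, hc]
        linear_combination (iqpPhase P θ a * starRingEnd ℂ (iqpPhase P θ (a + s))) * hcc

end
end

section
/- Let P be an n×l binary matrix and take θ = π/4. Then there exist an F₂-linear subspace W ≤ F₂ˡ and a vector v ∈ F₂ˡ such that for every x ∈ F₂ˡ: ℙ[X=x] = 2^{−dim W} if x ∈ v + W, and ℙ[X=x] = 0 otherwise. (The IQP distribution at θ = π/4 is uniform on an affine subspace of F₂ˡ.) -/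
open Matrix BigOperators Finset

noncomputable section

/-!
At `θ = π/4` one has `exp (iπ/4 · (-1)^u) = exp (iπ/4) · (-i)^u`, so up to a global phase the
amplitude of `x` is `2^(-l)` times the Fourier coefficient `ĝ x` of `g a = ∏ⱼ (-i)^(Pⱼ·a)`.
This `g` is a quadratic phase, `g (a + b) = g a · g b · (-1)^(a·PᵀP b)`, which gives
`|ĝ x|² = 2^l ∑_{b ∈ K} (-1)^(x·b) g b` with `K = ker PᵀP`. On `K`, `g` is a `±1`-valued character,
hence of the form `b ↦ (-1)^(v·b)`: summing the right-hand side over all `x` gives `2^l ≠ 0`, so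
for some `x` the character `b ↦ (-1)^(x·b) g b` of `K` has nonzero sum and is trivial. Hence the
probability is `2^(dim K - l)` on `v + K^⊥` and `0` elsewhere, and `dim K^⊥ = l - dim K`.
-/

lemma AddChar.map_sum_eq_prod {ι A M : Type*} [AddCommMonoid A] [CommMonoid M]
    (ψ : AddChar A M) (s : Finset ι) (f : ι → A) : ψ (∑ i ∈ s, f i) = ∏ i ∈ s, ψ (f i) := by
  induction s using Finset.cons_induction with
  | empty => simp
  | cons i s hi ih => rw [Finset.sum_cons, Finset.prod_cons, map_add_eq_mul, ih]

section DotOrthogonal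

variable {ι F : Type*} [Fintype ι] [Field F]

def dotOrthogonal (K : Submodule F (ι → F)) : Submodule F (ι → F) :=
  LinearMap.BilinForm.orthogonal (dotProductBilin F F) K

lemma mem_dotOrthogonal {K : Submodule F (ι → F)} {y : ι → F} :
    y ∈ dotOrthogonal K ↔ ∀ b ∈ K, b ⬝ᵥ y = 0 := Iff.rfl

lemma finrank_dotOrthogonal (K : Submodule F (ι → F)) :
    Module.finrank F (dotOrthogonal K) = Fintype.card ι - Module.finrank F K := by
  rw [dotOrthogonal, LinearMap.BilinForm.finrank_orthogonal,
    Module.finrank_fintype_fun_eq_card (R := F) (η := ι)]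
  exact ⟨fun y hy => dotProduct_eq_zero y fun w => by simpa using hy w,
    fun y hy => dotProduct_eq_zero y fun w => by simpa [dotProduct_comm y] using hy w⟩

end DotOrthogonal

namespace IQP

lemma zmod_two_eq_zero_or_one (u : ZMod 2) : u = 0 ∨ u = 1 := by decide +revert

def signChar : AddChar (ZMod 2) ℂ where
  toFun u := (-1) ^ u.val
  map_zero_eq_one' := by simp
  map_add_eq_mul' u v := by rw [ZMod.val_add, ← neg_one_pow_eq_pow_mod_two, pow_add]

lemma signChar_apply (u : ZMod 2) : signChar u = (-1) ^ u.val := rfl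

lemma signChar_eq_one_iff {u : ZMod 2} : signChar u = 1 ↔ u = 0 := by
  obtain rfl | rfl := zmod_two_eq_zero_or_one u
  · simp
  · norm_num [signChar_apply, ZMod.val_one]

lemma signChar_mul_self (u : ZMod 2) : signChar u * signChar u = 1 := by
  rw [← AddChar.map_add_eq_mul, CharTwo.add_self_eq_zero, AddChar.map_zero_eq_one]

lemma conj_signChar (u : ZMod 2) : starRingEnd ℂ (signChar u) = signChar u := by
  simp [signChar_apply]

lemma sum_signChar_eq_ite {A : Type*} [AddGroup A] [Fintype A] (f : A →+ ZMod 2)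
    [Decidable (f = 0)] :
    ∑ a, signChar (f a) = if f = 0 then (Fintype.card A : ℂ) else 0 := by
  have hf : signChar.compAddMonoidHom f = 0 ↔ f = 0 := by
    simp [AddChar.eq_zero_iff, signChar_eq_one_iff, AddMonoidHom.ext_iff]
  simpa only [hf, AddChar.compAddMonoidHom_apply] using (signChar.compAddMonoidHom f).sum_eq_ite

variable {ι : Type*} [Fintype ι]

lemma sum_signChar_dotProduct [DecidableEq ι] (c : ι → ZMod 2) :
    ∑ a : ι → ZMod 2, signChar (a ⬝ᵥ c) = if c = 0 then 2 ^ Fintype.card ι else 0 := by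
  have hc : AddMonoidHom.mk' (· ⬝ᵥ c) (fun a b => add_dotProduct a b c) = 0 ↔ c = 0 := by
    simp [AddMonoidHom.ext_iff, dotProduct_comm _ c, dotProduct_eq_zero_iff]
  refine (sum_signChar_eq_ite _).trans (if_congr hc ?_ rfl)
  simp

open scoped Classical in
lemma sum_signChar_dotProduct_submodule (K : Submodule (ZMod 2) (ι → ZMod 2)) [Fintype K]
    (y : ι → ZMod 2) :
    ∑ b : K, signChar ((b : ι → ZMod 2) ⬝ᵥ y) =
      if y ∈ dotOrthogonal K then (Fintype.card K : ℂ) else 0 := by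
  have hy : AddMonoidHom.mk' (fun b : K => (b : ι → ZMod 2) ⬝ᵥ y)
      (fun a b => add_dotProduct a b y) = 0 ↔ y ∈ dotOrthogonal K := by
    simp [AddMonoidHom.ext_iff, mem_dotOrthogonal]
  exact (sum_signChar_eq_ite _).trans (if_congr hy rfl rfl)

def quarterTurn (u : ZMod 2) : ℂ := (-Complex.I) ^ u.val

lemma quarterTurn_add (u v : ZMod 2) :
    quarterTurn (u + v) = quarterTurn u * quarterTurn v * signChar (u * v) := by
  obtain rfl | rfl := zmod_two_eq_zero_or_one u <;>
  obtain rfl | rfl := zmod_two_eq_zero_or_one v <;>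
  norm_num [quarterTurn, signChar_apply, ZMod.val_one, show ZMod.val (2 : ZMod 2) = 0 from rfl]

lemma norm_quarterTurn (u : ZMod 2) : ‖quarterTurn u‖ = 1 := by simp [quarterTurn]

lemma exp_pi_div_four_mul_signChar (u : ZMod 2) :
    Complex.exp (Complex.I * ↑(Real.pi / 4) * signChar u) =
      Complex.exp (Complex.I * ↑(Real.pi / 4)) * quarterTurn u := by
  obtain rfl | rfl := zmod_two_eq_zero_or_one u
  · simp [quarterTurn]
  · rw [signChar_apply, quarterTurn, ZMod.val_one, pow_one, pow_one,
      ← Complex.exp_neg_pi_div_two_mul_I, ← Complex.exp_add]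
    congr 1
    push_cast
    ring

section Phase

variable {m : Type*} [Fintype m] (P : Matrix m ι (ZMod 2))

def phase (a : ι → ZMod 2) : ℂ := ∏ j, quarterTurn (P j ⬝ᵥ a)

def gramKer : Submodule (ZMod 2) (ι → ZMod 2) := LinearMap.ker (Pᵀ * P).mulVecLin

instance : Fintype (gramKer P) := Fintype.ofFinite _

lemma mem_gramKer {b : ι → ZMod 2} : b ∈ gramKer P ↔ (Pᵀ * P) *ᵥ b = 0 := Iff.rfl

@[simp] lemma phase_zero : phase P 0 = 1 := by simp [phase, quarterTurn]

lemma norm_phase (a : ι → ZMod 2) : ‖phase P a‖ = 1 := by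
  simp [phase, norm_quarterTurn]

lemma phase_add (a b : ι → ZMod 2) :
    phase P (a + b) = phase P a * phase P b * signChar (a ⬝ᵥ (Pᵀ * P) *ᵥ b) := by
  have hgram : a ⬝ᵥ (Pᵀ * P) *ᵥ b = ∑ j, (P j ⬝ᵥ a) * (P j ⬝ᵥ b) := by
    rw [← mulVec_mulVec, dotProduct_mulVec, vecMul_transpose]
    rfl
  simp only [phase, dotProduct_add, quarterTurn_add, prod_mul_distrib, hgram,
    AddChar.map_sum_eq_prod]

lemma phase_add_of_mem (a : ι → ZMod 2) {b : ι → ZMod 2} (hb : b ∈ gramKer P) :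
    phase P (a + b) = phase P a * phase P b := by
  rw [phase_add, (mem_gramKer P).1 hb, dotProduct_zero, AddChar.map_zero_eq_one, mul_one]

def phaseChar : AddChar (gramKer P) ℂ where
  toFun b := phase P b
  map_zero_eq_one' := phase_zero P
  map_add_eq_mul' b b' := phase_add_of_mem P b b'.2

variable [DecidableEq ι]

def phaseTransform (x : ι → ZMod 2) : ℂ := ∑ a, signChar (x ⬝ᵥ a) * phase P a

lemma phaseTransform_mul_conj (x : ι → ZMod 2) :
    phaseTransform P x * starRingEnd ℂ (phaseTransform P x) =
      2 ^ Fintype.card ι * ∑ b : gramKer P, signChar (x ⬝ᵥ b) * phase P b := by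
  have hterm : ∀ a b : ι → ZMod 2,
      signChar (x ⬝ᵥ (a + b)) * phase P (a + b) *
          starRingEnd ℂ (signChar (x ⬝ᵥ a) * phase P a) =
        signChar (x ⬝ᵥ b) * phase P b * signChar (a ⬝ᵥ (Pᵀ * P) *ᵥ b) := by
    intro a b
    have hunit : phase P a * starRingEnd ℂ (phase P a) = 1 := by
      rw [Complex.mul_conj', norm_phase]; norm_num
    rw [map_mul, conj_signChar, dotProduct_add, AddChar.map_add_eq_mul, phase_add]
    linear_combination (signChar (x ⬝ᵥ b) * phase P b * signChar (a ⬝ᵥ (Pᵀ * P) *ᵥ b)) *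
      (signChar (x ⬝ᵥ a) * signChar (x ⬝ᵥ a) * hunit + signChar_mul_self (x ⬝ᵥ a))
  calc phaseTransform P x * starRingEnd ℂ (phaseTransform P x)
      = ∑ a, ∑ b, signChar (x ⬝ᵥ (a + b)) * phase P (a + b) *
          starRingEnd ℂ (signChar (x ⬝ᵥ a) * phase P a) := by
        rw [phaseTransform, map_sum, sum_mul_sum, sum_comm]
        exact sum_congr rfl fun a _ => (Equiv.sum_comp (Equiv.addLeft a) _).symm
    _ = ∑ b, signChar (x ⬝ᵥ b) * phase P b * ∑ a, signChar (a ⬝ᵥ (Pᵀ * P) *ᵥ b) := by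
        simp_rw [hterm, mul_sum]
        exact sum_comm
    _ = 2 ^ Fintype.card ι * ∑ b : gramKer P, signChar (x ⬝ᵥ b) * phase P b := by
        simp_rw [sum_signChar_dotProduct, mul_ite, mul_zero]
        rw [← sum_filter, sum_subtype _ (p := (· ∈ gramKer P)) (fun b => by simp [mem_gramKer]),
          ← sum_mul, mul_comm]

lemma exists_phase_eq_signChar :
    ∃ v : ι → ZMod 2, ∀ b ∈ gramKer P, phase P b = signChar (v ⬝ᵥ b) := by
  have htotal : ∑ x : ι → ZMod 2, ∑ b : gramKer P, signChar (x ⬝ᵥ b) * phase P b =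
      2 ^ Fintype.card ι := by
    rw [sum_comm]
    simp_rw [← sum_mul, sum_signChar_dotProduct, Submodule.coe_eq_zero, ite_mul, zero_mul]
    simp
  obtain ⟨v, -, hv⟩ := exists_ne_zero_of_sum_ne_zero (htotal ▸ pow_ne_zero _ two_ne_zero)
  have hχ : signChar.compAddMonoidHom
      (AddMonoidHom.mk' (fun b : gramKer P => v ⬝ᵥ b) fun a b => dotProduct_add v a b) *
        phaseChar P = 0 :=
    AddChar.sum_ne_zero_iff_eq_zero.1 hv
  refine ⟨v, fun b hb => ?_⟩
  have hb1 : signChar (v ⬝ᵥ b) * phase P b = 1 := AddChar.eq_zero_iff.1 hχ ⟨b, hb⟩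
  calc phase P b = signChar (v ⬝ᵥ b) * (signChar (v ⬝ᵥ b) * phase P b) := by
        rw [← mul_assoc, signChar_mul_self, one_mul]
    _ = signChar (v ⬝ᵥ b) := by rw [hb1, mul_one]

open scoped Classical in
lemma sq_norm_phaseTransform {v : ι → ZMod 2}
    (hv : ∀ b ∈ gramKer P, phase P b = signChar (v ⬝ᵥ b)) (x : ι → ZMod 2) :
    ‖phaseTransform P x‖ ^ 2 = 2 ^ Fintype.card ι *
      if x - v ∈ dotOrthogonal (gramKer P) then 2 ^ Module.finrank (ZMod 2) (gramKer P)
      else 0 := by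
  have hchar : ∀ b : gramKer P,
      signChar (x ⬝ᵥ b) * phase P b = signChar ((b : ι → ZMod 2) ⬝ᵥ (x - v)) := by
    intro b
    rw [hv b b.2, ← AddChar.map_add_eq_mul, dotProduct_comm (b : ι → ZMod 2), sub_dotProduct,
      CharTwo.sub_eq_add]
  apply Complex.ofReal_injective
  rw [Complex.ofReal_pow, ← Complex.mul_conj', phaseTransform_mul_conj,
    Fintype.sum_congr _ _ hchar, sum_signChar_dotProduct_submodule,
    Module.card_eq_pow_finrank (K := ZMod 2) (V := gramKer P), ZMod.card]
  split_ifs <;> push_cast <;> rfl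

end Phase

lemma iqpProb_pi_div_four {n l : ℕ} (P : Matrix (Fin n) (Fin l) (ZMod 2))
    (x : Fin l → ZMod 2) :
    iqpProb P (Real.pi / 4) x = ((2 : ℝ) ^ (-(l : ℤ))) ^ 2 * ‖phaseTransform P x‖ ^ 2 := by
  have hexp : ∀ a : Fin l → ZMod 2,
      Complex.exp (Complex.I * ↑(Real.pi / 4) * ∑ j, signChar (P j ⬝ᵥ a)) =
        Complex.exp (Complex.I * ↑(Real.pi / 4)) ^ n * phase P a := by
    intro a
    rw [mul_sum, Complex.exp_sum]
    simp_rw [exp_pi_div_four_mul_signChar, prod_mul_distrib, prod_const, card_univ,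
      Fintype.card_fin]
    rfl
  have hunit : ‖Complex.exp (Complex.I * ↑(Real.pi / 4))‖ = 1 := by
    rw [mul_comm, Complex.norm_exp_ofReal_mul_I]
  simp_rw [iqpProb, ← signChar_apply, hexp, mul_left_comm _ (Complex.exp _ ^ n), ← mul_sum]
  rw [norm_mul, norm_mul, norm_pow, hunit, one_pow, one_mul, norm_zpow, Complex.norm_two, mul_pow]
  rfl

open scoped Classical in
lemma iqpProb_pi_div_four_eq_ite {n l : ℕ} (P : Matrix (Fin n) (Fin l) (ZMod 2))
    {v : Fin l → ZMod 2} (hv : ∀ b ∈ gramKer P, phase P b = signChar (v ⬝ᵥ b))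
    (x : Fin l → ZMod 2) :
    iqpProb P (Real.pi / 4) x = if x - v ∈ dotOrthogonal (gramKer P) then
      (2 : ℝ) ^ (-(Module.finrank (ZMod 2) (dotOrthogonal (gramKer P)) : ℤ)) else 0 := by
  rw [iqpProb_pi_div_four, sq_norm_phaseTransform P hv, finrank_dotOrthogonal, Fintype.card_fin]
  split_ifs
  · have hk : Module.finrank (ZMod 2) (gramKer P) ≤ l :=
      (Submodule.finrank_le _).trans_eq (by simp)
    rw [Nat.cast_sub hk, neg_sub, zpow_sub₀ two_ne_zero, _root_.zpow_neg]
    simp only [zpow_natCast]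
    field_simp
  · simp

end IQP

/-- at `θ = π/4` the IQP distribution is uniform on an affine
subspace `v + W` of `F₂ˡ`. -/
theorem iqp_uniform_on_affine_subspace {n l : ℕ} (P : Matrix (Fin n) (Fin l) (ZMod 2)) :
    ∃ (W : Submodule (ZMod 2) (Fin l → ZMod 2)) (v : Fin l → ZMod 2),
      ∀ x : Fin l → ZMod 2,
        (x - v ∈ W → iqpProb P (Real.pi / 4) x =
          (2 : ℝ) ^ (-(Module.finrank (ZMod 2) W : ℤ))) ∧
        (x - v ∉ W → iqpProb P (Real.pi / 4) x = 0) := by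
  obtain ⟨v, hv⟩ := IQP.exists_phase_eq_signChar P
  refine ⟨dotOrthogonal (IQP.gramKer P), v, fun x => ⟨fun hx => ?_, fun hx => ?_⟩⟩
  · rw [IQP.iqpProb_pi_div_four_eq_ite P hv, if_pos hx]
  · rw [IQP.iqpProb_pi_div_four_eq_ite P hv, if_neg hx]

end
end

section
/- Let P be an n×l binary matrix and let s, t ∈ F₂ˡ both satisfy Pᵀ·P·s = 0 and Pᵀ·P·t = 0. Then the Hamming weight of P·(s+t) is congruent to the sum of the Hamming weights of P·s and P·t modulo 4. In particular, the set U := { s : Pᵀ·P·s = 0 and 4 divides the Hamming weight of P·s } is closed under addition, hence is an F₂-linear subspace of F₂ˡ. -/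
open Matrix BigOperators Finset

noncomputable section

/-! Over F₂, `|a + b| = |a| + |b| - 2 |a ∧ b|`, and the overlap `|a ∧ b|` has the parity of
`a ⬝ b`. For `a = P s`, `b = P t` this parity is `(Pᵀ P s) ⬝ t = 0`, so the correction term
vanishes mod 4. -/

namespace ZMod

theorem val_add_add_two_mul_val_mul (x y : ZMod 2) :
    (x + y).val + 2 * (x * y).val = x.val + y.val := by
  revert x y; decide

end ZMod

theorem hammingNorm_eq_sum_val {ι : Type*} [Fintype ι] (c : ι → ZMod 2) :
    hammingNorm c = ∑ i, (c i).val := by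
  rw [hammingNorm, Finset.card_filter]
  refine Finset.sum_congr rfl fun i _ => ?_
  generalize c i = x
  revert x; decide

theorem hammingNorm_add_add_two_mul {ι : Type*} [Fintype ι] (a b : ι → ZMod 2) :
    hammingNorm (a + b) + 2 * ∑ i, (a i * b i).val = hammingNorm a + hammingNorm b := by
  simp only [hammingNorm_eq_sum_val, Pi.add_apply, Finset.mul_sum, ← Finset.sum_add_distrib,
    ZMod.val_add_add_two_mul_val_mul]

theorem hammingNorm_add_modEq_four {ι : Type*} [Fintype ι] {a b : ι → ZMod 2}
    (hab : a ⬝ᵥ b = 0) :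
    hammingNorm (a + b) ≡ hammingNorm a + hammingNorm b [MOD 4] := by
  obtain ⟨k, hk⟩ : 2 ∣ ∑ i, (a i * b i).val := by
    rw [← ZMod.natCast_eq_zero_iff, ← hab]
    simp [dotProduct]
  rw [← hammingNorm_add_add_two_mul, hk, ← mul_assoc]
  exact (Nat.modEq_iff_dvd' (Nat.le_add_right _ _)).mpr ⟨k, by omega⟩

theorem dotProduct_mulVec_eq_zero_of_transpose_mul_mulVec_eq_zero {R m n : Type*}
    [CommSemiring R] [Fintype m] [Fintype n] {P : Matrix m n R} {s : n → R} (hs : (Pᵀ * P) *ᵥ s = 0) (t : n → R) :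
    P *ᵥ s ⬝ᵥ P *ᵥ t = 0 := by
  rw [dotProduct_mulVec, ← mulVec_transpose, mulVec_mulVec, hs, zero_dotProduct]

theorem weight_add_mod_four_general {n l : ℕ} (P : Matrix (Fin n) (Fin l) (ZMod 2))
    (s t : Fin l → ZMod 2) (hs : (Pᵀ * P).mulVec s = 0) :
    hammingNorm (P.mulVec (s + t)) ≡
        hammingNorm (P.mulVec s) + hammingNorm (P.mulVec t) [MOD 4] ∧
      ∀ u v : Fin l → ZMod 2,
        ((Pᵀ * P).mulVec u = 0 ∧ 4 ∣ hammingNorm (P.mulVec u)) →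
        ((Pᵀ * P).mulVec v = 0 ∧ 4 ∣ hammingNorm (P.mulVec v)) →
        ((Pᵀ * P).mulVec (u + v) = 0 ∧ 4 ∣ hammingNorm (P.mulVec (u + v))) := by
  have weight_add {s : Fin l → ZMod 2} (hs : (Pᵀ * P) *ᵥ s = 0) (t : Fin l → ZMod 2) :=
    mulVec_add P s t ▸
      hammingNorm_add_modEq_four (dotProduct_mulVec_eq_zero_of_transpose_mul_mulVec_eq_zero hs t)
  refine ⟨weight_add hs t, fun u v ⟨hu, hu4⟩ ⟨hv, hv4⟩ => ⟨?_, ?_⟩⟩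
  · rw [mulVec_add, hu, hv, add_zero]
  · exact Nat.modEq_zero_iff_dvd.mp <|
      (weight_add hu v).trans (Nat.modEq_zero_iff_dvd.mpr (dvd_add hu4 hv4))

/-- if `Pᵀ·P·s = 0` and `Pᵀ·P·t = 0` then
`|P·(s+t)| ≡ |P·s| + |P·t| (mod 4)`; in particular the set
`U = {s : Pᵀ·P·s = 0 ∧ 4 ∣ |P·s|}` is closed under addition. -/
theorem weight_add_mod_four {n l : ℕ} (P : Matrix (Fin n) (Fin l) (ZMod 2))
    (s t : Fin l → ZMod 2) (hs : (Pᵀ * P).mulVec s = 0) (ht : (Pᵀ * P).mulVec t = 0) :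
    hammingNorm (P.mulVec (s + t)) ≡
        hammingNorm (P.mulVec s) + hammingNorm (P.mulVec t) [MOD 4] ∧
      ∀ u v : Fin l → ZMod 2,
        ((Pᵀ * P).mulVec u = 0 ∧ 4 ∣ hammingNorm (P.mulVec u)) →
        ((Pᵀ * P).mulVec v = 0 ∧ 4 ∣ hammingNorm (P.mulVec v)) →
        ((Pᵀ * P).mulVec (u + v) = 0 ∧ 4 ∣ hammingNorm (P.mulVec (u + v))) :=
  weight_add_mod_four_general P s t hs

end
end
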